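/- arXiv:math/0504175 — 2 statements merged into one kernel-verified Lean document; each statement's English description precedes it below -/
import Mathlib

section
/- Let C(k) = Σ over all words w ∈ {L,R}^k of the product (M_w)₀₀ · (M_w)₁₁ of the diagonal entries of M_w. Then C(1) = 2, C(2) = 6, and C(k) = (1/17)·2^{-k-2}·(17·2^{2k+1} - (√17 - 17)(5+√17)^k + (5-√17)^k(17+√17)). -/
open Matrix MeasureTheory BigOperators

def Lm : Matrix (Fin 2) (Fin 2) ℤ := !![1,1;0,1]
def Rm : Matrix (Fin 2) (Fin 2) ℤ := !![1,0;1,1]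

/-- Ordered product of the matrices corresponding to a word over {L,R}. -/
def Mw {k : ℕ} (w : Fin k → Fin 2) : Matrix (Fin 2) (Fin 2) ℤ :=
  (List.ofFn (fun i => if w i = 0 then Lm else Rm)).prod

/-- C(k): the sum over all 2^k words of the product of the two diagonal
entries of the matrix product. -/
def Cdiag (k : ℕ) : ℤ := ∑ w : Fin k → Fin 2, Mw w 0 0 * Mw w 1 1

/-- transfer matrix L⊗L + R⊗R -/
def Tm : Matrix (Fin 4) (Fin 4) ℤ := !![2,1,1,1; 1,2,0,1; 1,0,2,1; 1,1,1,2]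

def idx (a c : Fin 2) : Fin 4 := ⟨2 * a.val + c.val, by omega⟩

lemma Mw_cons {k : ℕ} (x : Fin 2) (w : Fin k → Fin 2) :
    Mw (Fin.cons x w) = (if x = 0 then Lm else Rm) * Mw w := by
  simp only [Mw, List.ofFn_succ, Fin.cons_zero, Fin.cons_succ, List.prod_cons]

lemma T_apply (a c e f : Fin 2) :
    Tm (idx a c) (idx e f) = Lm a e * Lm c f + Rm a e * Rm c f := by
  fin_cases a <;> fin_cases c <;> fin_cases e <;> fin_cases f <;>
    simp [Tm, Lm, Rm, idx] <;> rfl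

lemma idx00 : idx 0 0 = 0 := rfl
lemma idx01 : idx 0 1 = 1 := rfl
lemma idx10 : idx 1 0 = 2 := rfl
lemma idx11 : idx 1 1 = 3 := rfl

lemma sum_idx (F : Fin 4 → ℤ) :
    ∑ e : Fin 2, ∑ f : Fin 2, F (idx e f) = ∑ p : Fin 4, F p := by
  rw [Fin.sum_univ_two, Fin.sum_univ_two, Fin.sum_univ_two, Fin.sum_univ_four,
    idx00, idx01, idx10, idx11]
  ring

lemma key (k : ℕ) : ∀ a b c d : Fin 2,
    ∑ w : Fin k → Fin 2, Mw w a b * Mw w c d = (Tm ^ k) (idx a c) (idx b d) := by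
  induction k with
  | zero =>
      intro a b c d
      fin_cases a <;> fin_cases b <;> fin_cases c <;> fin_cases d <;> decide
  | succ k ih =>
      intro a b c d
      have hbij : ∑ w : Fin (k+1) → Fin 2, Mw w a b * Mw w c d
          = ∑ x : Fin 2, ∑ w : Fin k → Fin 2,
              Mw (Fin.cons x w) a b * Mw (Fin.cons x w) c d := by
        rw [show (∑ w : Fin (k+1) → Fin 2, Mw w a b * Mw w c d)
            = ∑ p : Fin 2 × (Fin k → Fin 2),
                Mw (Fin.cons p.1 p.2) a b * Mw (Fin.cons p.1 p.2) c d from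
          (Fintype.sum_equiv (Fin.consEquiv fun _ => Fin 2) _ _ (fun p => rfl)).symm]
        rw [Fintype.sum_prod_type]
      rw [hbij]
      have hterm : ∀ x : Fin 2, ∀ w : Fin k → Fin 2,
          Mw (Fin.cons x w) a b * Mw (Fin.cons x w) c d
          = ∑ e : Fin 2, ∑ f : Fin 2,
              ((if x = 0 then Lm else Rm) a e * (if x = 0 then Lm else Rm) c f)
                * (Mw w e b * Mw w f d) := by
        intro x w
        rw [Mw_cons, Matrix.mul_apply, Matrix.mul_apply, Finset.sum_mul_sum]
        apply Finset.sum_congr rfl; intro e _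
        apply Finset.sum_congr rfl; intro f _
        ring
      simp only [hterm]
      rw [Finset.sum_comm]
      have : ∀ w : Fin k → Fin 2,
          ∑ x : Fin 2, ∑ e : Fin 2, ∑ f : Fin 2,
            ((if x = 0 then Lm else Rm) a e * (if x = 0 then Lm else Rm) c f)
              * (Mw w e b * Mw w f d)
          = ∑ e : Fin 2, ∑ f : Fin 2,
              Tm (idx a c) (idx e f) * (Mw w e b * Mw w f d) := by
        intro w
        rw [Finset.sum_comm]
        apply Finset.sum_congr rfl; intro e _
        rw [Finset.sum_comm]
        apply Finset.sum_congr rfl; intro f _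
        rw [T_apply, Fin.sum_univ_two]
        have h0 : ((0 : Fin 2) = 0) := rfl
        have h1 : ((1 : Fin 2) ≠ 0) := by decide
        rw [if_pos h0, if_neg h1]
        ring
      simp only [this]
      rw [Finset.sum_comm]
      have : ∀ e : Fin 2, ∑ w : Fin k → Fin 2, ∑ f : Fin 2,
            Tm (idx a c) (idx e f) * (Mw w e b * Mw w f d)
          = ∑ f : Fin 2, Tm (idx a c) (idx e f) * (Tm ^ k) (idx e f) (idx b d) := by
        intro e
        rw [Finset.sum_comm]
        apply Finset.sum_congr rfl; intro f _
        rw [← Finset.mul_sum, ih]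
      simp only [this]
      rw [sum_idx (fun p => Tm (idx a c) p * (Tm ^ k) p (idx b d))]
      rw [pow_succ', Matrix.mul_apply]

lemma Cdiag_eq (k : ℕ) : Cdiag k = (Tm ^ k) 1 1 := by
  have := key k 0 0 1 1
  have hidx : idx 0 1 = 1 := rfl
  rw [hidx] at this
  exact this

lemma T_col (j : Fin 4) :
    (Tm ^ 3) j 1 = 7 * (Tm ^ 2) j 1 - 12 * Tm j 1 + 4 * (1 : Matrix (Fin 4) (Fin 4) ℤ) j 1 := by
  fin_cases j <;> decide

lemma Cdiag_rec (k : ℕ) :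
    Cdiag (k + 3) = 7 * Cdiag (k + 2) - 12 * Cdiag (k + 1) + 4 * Cdiag k := by
  have h3 : Cdiag (k + 3) = ∑ j : Fin 4, (Tm ^ k) 1 j * (Tm ^ 3) j 1 := by
    rw [Cdiag_eq, pow_add, Matrix.mul_apply]
  have h2 : ∀ m : ℕ, Cdiag (k + m) = ∑ j : Fin 4, (Tm ^ k) 1 j * (Tm ^ m) j 1 := by
    intro m; rw [Cdiag_eq, pow_add, Matrix.mul_apply]
  have h0 : Cdiag k = ∑ j : Fin 4, (Tm ^ k) 1 j * (1 : Matrix (Fin 4) (Fin 4) ℤ) j 1 := by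
    have := h2 0; simpa using this
  rw [h3, h2 2, h2 1, h0, pow_one, Finset.mul_sum, Finset.mul_sum, Finset.mul_sum,
    ← Finset.sum_sub_distrib, ← Finset.sum_add_distrib]
  apply Finset.sum_congr rfl; intro j _
  rw [T_col j]; ring

noncomputable def fcl (k : ℕ) : ℝ :=
  (1 / 17) * 2 ^ (-(k : ℝ) - 2) *
    (17 * 2 ^ (2 * k + 1)
      - (Real.sqrt 17 - 17) * (5 + Real.sqrt 17) ^ k
      + (5 - Real.sqrt 17) ^ k * (17 + Real.sqrt 17))

lemma rpow_eq (k : ℕ) : (2 : ℝ) ^ (-(k : ℝ) - 2) = ((2 : ℝ) ^ (k + 2))⁻¹ := by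
  have : -(k : ℝ) - 2 = -(((k + 2 : ℕ) : ℝ)) := by push_cast; ring
  rw [this, Real.rpow_neg (by norm_num), Real.rpow_natCast]

lemma fcl_rec (k : ℕ) : fcl (k + 3) = 7 * fcl (k + 2) - 12 * fcl (k + 1) + 4 * fcl k := by
  have hs : Real.sqrt 17 ^ 2 = 17 := Real.sq_sqrt (by norm_num)
  set s := Real.sqrt 17
  simp only [fcl, rpow_eq]
  have p1 : ∀ j : ℕ, (2:ℝ) ^ (k + j + 2) = 2 ^ k * 2 ^ (j + 2) := by
    intro j; ring
  have p2 : ∀ j : ℕ, (2:ℝ) ^ (2 * (k + j) + 1) = ((2:ℝ) ^ k) ^ 2 * 2 ^ (2 * j + 1) := by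
    intro j; rw [← pow_mul, ← pow_add]; congr 1; omega
  have p2' : (2:ℝ) ^ (2 * k + 1) = ((2:ℝ) ^ k) ^ 2 * 2 := by
    rw [← pow_mul, ← pow_succ]; congr 1; omega
  have p1' : (2:ℝ) ^ (k + 2) = 2 ^ k * 4 := by
    rw [pow_add]; norm_num
  have p3 : ∀ j : ℕ, ((5:ℝ) + s) ^ (k + j) = (5 + s) ^ k * (5 + s) ^ j := fun j => pow_add _ _ _
  have p4 : ∀ j : ℕ, ((5:ℝ) - s) ^ (k + j) = (5 - s) ^ k * (5 - s) ^ j := fun j => pow_add _ _ _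
  rw [p1 3, p1 2, p1 1, p1', p2 3, p2 2, p2 1, p2', p3 3, p3 2, p3 1, p4 3, p4 2, p4 1]
  set q := (2:ℝ) ^ k
  set x := ((5:ℝ) + s) ^ k
  set y := ((5:ℝ) - s) ^ k
  simp only [mul_inv]
  linear_combination (1 / (17 * 32)) * q⁻¹ * ((17 - s) * (s + 1) * x + (17 + s) * (1 - s) * y) * hs

lemma Cdiag_eq_fcl (k : ℕ) : (Cdiag k : ℝ) = fcl k := by
  have hs : Real.sqrt 17 ^ 2 = 17 := Real.sq_sqrt (by norm_num)
  have h0 : (Cdiag 0 : ℝ) = fcl 0 := by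
    have h : Cdiag 0 = 1 := by rw [Cdiag_eq]; decide
    rw [h, fcl, rpow_eq]; push_cast; ring
  have h1 : (Cdiag 1 : ℝ) = fcl 1 := by
    have h : Cdiag 1 = 2 := by rw [Cdiag_eq]; decide
    rw [h, fcl, rpow_eq]; push_cast; linear_combination (1 / 68 : ℝ) * hs
  have h2 : (Cdiag 2 : ℝ) = fcl 2 := by
    have h : Cdiag 2 = 6 := by rw [Cdiag_eq]; decide
    rw [h, fcl, rpow_eq]; push_cast; linear_combination (-7 / 136 : ℝ) * hs
  induction k using Nat.strong_induction_on with
  | _ k ih =>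
    match k with
    | 0 => exact h0
    | 1 => exact h1
    | 2 => exact h2
    | (m + 3) =>
      have e0 := ih m (by omega)
      have e1 := ih (m + 1) (by omega)
      have e2 := ih (m + 2) (by omega)
      rw [Cdiag_rec m, fcl_rec m]
      push_cast
      rw [e0, e1, e2]

/-- C(1)=2, C(2)=6, and the closed form
C(k) = (1/17)·2^{-k-2}·(17·2^{2k+1} - (√17-17)(5+√17)^k + (5-√17)^k(17+√17)). -/
theorem diag_product_closed_form :
    Cdiag 1 = 2 ∧ Cdiag 2 = 6 ∧
    ∀ k : ℕ, (Cdiag k : ℝ)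
      = (1 / 17) * 2 ^ (-(k : ℝ) - 2) *
        (17 * 2 ^ (2 * k + 1)
          - (Real.sqrt 17 - 17) * (5 + Real.sqrt 17) ^ k
          + (5 - Real.sqrt 17) ^ k * (17 + Real.sqrt 17)) := by
  refine ⟨by rw [Cdiag_eq]; decide, by rw [Cdiag_eq]; decide, fun k => Cdiag_eq_fcl k⟩
end

section
/- For a uniformly random word w of length k over {L,R}, the expected value of each diagonal entry of M_w is (3^k + 1)/2^{k+1}, and hence the expected trace is (3^k + 1)/2^k. -/
/-! `∑_w M_w` expands `(L + R)^k` by distributivity, and `L + R = !![2, 1; 1, 2]` has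
eigenvalues `3` and `1` with eigenvectors `(1, ±1)`, so each diagonal entry of its `k`-th power
is `(3^k + 1)/2`. -/

open Matrix MeasureTheory BigOperators

theorem sum_prod_ofFn_eq_sum_pow {R ι : Type*} [Semiring R] [Fintype ι] (f : ι → R) (k : ℕ) :
    ∑ w : Fin k → ι, (List.ofFn fun i => f (w i)).prod = (∑ a, f a) ^ k := by
  induction k with
  | zero => simp
  | succ k ih =>
    rw [← (Fin.consEquiv fun _ => ι).sum_comp, Fintype.sum_prod_type, pow_succ', ← ih,
      Finset.sum_mul]
    simp [Fin.consEquiv, List.ofFn_succ, Finset.mul_sum]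

theorem two_smul_symm_pow {R : Type*} [CommRing R] (a b : R) (k : ℕ) :
    (2 : R) • !![a, b; b, a] ^ k =
      !![(a + b) ^ k + (a - b) ^ k, (a + b) ^ k - (a - b) ^ k;
        (a + b) ^ k - (a - b) ^ k, (a + b) ^ k + (a - b) ^ k] := by
  induction k with
  | zero => ext i j; fin_cases i <;> fin_cases j <;> simp [one_add_one_eq_two]
  | succ k ih =>
    rw [pow_succ', ← mul_smul_comm, ih]
    ext i j
    fin_cases i <;> fin_cases j <;> simp [Matrix.mul_apply, Fin.sum_univ_two] <;> ring

theorem sum_Mw_eq_pow (k : ℕ) : ∑ w : Fin k → Fin 2, Mw w = !![2, 1; 1, 2] ^ k := by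
  have hletters : ∑ a : Fin 2, (if a = 0 then Lm else Rm) = !![2, 1; 1, 2] := by
    rw [Fin.sum_univ_two]
    ext i j; fin_cases i <;> fin_cases j <;> rfl
  rw [← hletters]
  exact sum_prod_ofFn_eq_sum_pow (fun a : Fin 2 => if a = 0 then Lm else Rm) k

theorem two_mul_sum_Mw_diag (k : ℕ) (i : Fin 2) :
    2 * ∑ w : Fin k → Fin 2, Mw w i i = 3 ^ k + 1 := by
  have h := congrFun (congrFun (two_smul_symm_pow (2 : ℤ) 1 k) i) i
  rw [← sum_Mw_eq_pow, Matrix.smul_apply, Matrix.sum_apply, smul_eq_mul] at h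
  fin_cases i <;> simpa using h

/-- For a uniformly random word of length k, the expected value of each
diagonal entry is (3^k+1)/2^(k+1), hence the expected trace is (3^k+1)/2^k. -/
theorem expected_diagonal_and_trace (k : ℕ) :
    (∑ w : Fin k → Fin 2, (Mw w 0 0 : ℝ)) / 2 ^ k = (3 ^ k + 1) / 2 ^ (k + 1) ∧
    (∑ w : Fin k → Fin 2, (Mw w 1 1 : ℝ)) / 2 ^ k = (3 ^ k + 1) / 2 ^ (k + 1) ∧
    (∑ w : Fin k → Fin 2, ((Mw w).trace : ℝ)) / 2 ^ k = (3 ^ k + 1) / 2 ^ k := by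
  have hdiag (i : Fin 2) : ∑ w : Fin k → Fin 2, (Mw w i i : ℝ) = (3 ^ k + 1) / 2 := by
    rw [eq_div_iff two_ne_zero, mul_comm]
    exact_mod_cast two_mul_sum_Mw_diag k i
  have htrace : ∑ w : Fin k → Fin 2, ((Mw w).trace : ℝ) =
      ∑ w : Fin k → Fin 2, (Mw w 0 0 : ℝ) + ∑ w : Fin k → Fin 2, (Mw w 1 1 : ℝ) := by
    simp only [Matrix.trace_fin_two, Int.cast_add, Finset.sum_add_distrib]
  refine ⟨?_, ?_, ?_⟩
  · rw [hdiag, pow_succ]; field_simp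
  · rw [hdiag, pow_succ]; field_simp
  · rw [htrace, hdiag, hdiag]; ring
end
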